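/- arXiv:1610.00855 — 3 statements merged into one kernel-verified Lean document; each statement's English description precedes it below -/
import Mathlib

section
/- A K_{1,3}-free (claw-free) split graph G has a Hamiltonian cycle if and only if G is 2-connected. -/
open SimpleGraph

variable {V : Type*}

/-- `I` is an independent set in `G`. -/
def IndepOn (G : SimpleGraph V) (I : Set V) : Prop :=
  ∀ ⦃u⦄, u ∈ I → ∀ ⦃v⦄, v ∈ I → ¬ G.Adj u v

/-- `(K, I)` is a split partition of `G`: `K` a clique, `I` independent,
partitioning the vertex set. -/
def SplitPartition (G : SimpleGraph V) (K I : Set V) : Prop :=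
  Disjoint K I ∧ K ∪ I = Set.univ ∧ G.IsClique K ∧ IndepOn G I

/-- `G` has no induced copy of the star `K_{1,n}` (center plus `n` pairwise
nonadjacent leaves). -/
def StarFree (G : SimpleGraph V) (n : ℕ) : Prop :=
  ¬ ∃ (c : V) (L : Finset V), L.card = n ∧ c ∉ L ∧ (∀ l ∈ L, G.Adj c l) ∧
      (∀ l ∈ L, ∀ m ∈ L, l ≠ m → ¬ G.Adj l m)

/-- `G` is 2-connected: at least 3 vertices and deleting any single vertex
leaves a connected graph. -/
def TwoConnected (G : SimpleGraph V) [Fintype V] : Prop :=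
  3 ≤ Fintype.card V ∧ ∀ v : V, (G.induce (({v} : Set V)ᶜ)).Connected

/-- `G` has a Hamiltonian cycle (a spanning cycle). -/
def HasHamCycle (G : SimpleGraph V) : Prop :=
  letI := Classical.decEq V
  ∃ (a : V) (p : G.Walk a a), p.IsHamiltonianCycle

/-!
A Hamiltonian cycle minus any vertex is a Hamiltonian path, which gives 2-connectedness.

For the converse take a longest cycle `C` (of length at least 3, as a triangle exists). If `u` lies
off `C` and is adjacent to `v` on `C`, then `u` is adjacent to neither `C`-neighbour of `v`, or `u`
could be inserted into `C`; so claw-freeness at `v` makes the two `C`-neighbours of `v` adjacent.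
Consequently every clique vertex `w` lies on `C`: otherwise the `C`-neighbours of a clique vertex on
`C` are not adjacent to `w`, hence independent, hence not adjacent. An independent vertex `u` off
`C` has two clique neighbours `k₁, k₂`, which lie on `C`, and one `C`-neighbour `q` of `k₂` is in the
clique, say its successor. Removing `k₁` from `C` (its `C`-neighbours are adjacent) and putting it
back as `k₂ u k₁ q` gives a longer cycle.
-/

namespace Cycle

variable {α : Type*}

theorem coe_append_comm (l₁ l₂ : List α) :
    ((l₁ ++ l₂ : List α) : Cycle α) = (l₂ ++ l₁ : List α) :=
  coe_eq_coe.2 List.isRotated_append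

def Consecutive (s : Cycle α) (a b : α) : Prop :=
  ∃ l : List α, s = (a :: b :: l : List α)

theorem consecutive_of_eq_append {s : Cycle α} {a b : α} {A B : List α}
    (h : s = (A ++ a :: b :: B : List α)) : s.Consecutive a b :=
  ⟨B ++ A, h.trans (coe_append_comm _ _)⟩

theorem consecutive_of_eq_cons_append {s : Cycle α} {a b : α} {A : List α}
    (h : s = (b :: (A ++ [a]) : List α)) : s.Consecutive a b :=
  ⟨A, by rw [h, ← List.cons_append, coe_append_comm]; rfl⟩

theorem Consecutive.reverse {s : Cycle α} {a b : α} (h : s.Consecutive a b) :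
    s.reverse.Consecutive b a := by
  obtain ⟨l, rfl⟩ := h
  refine ⟨l.reverse, ?_⟩
  rw [reverse_coe]
  simpa using coe_append_comm l.reverse [b, a]

theorem Consecutive.left_mem {s : Cycle α} {a b : α} (h : s.Consecutive a b) : a ∈ s := by
  obtain ⟨l, rfl⟩ := h
  simp

theorem Consecutive.right_mem {s : Cycle α} {a b : α} (h : s.Consecutive a b) : b ∈ s := by
  obtain ⟨l, rfl⟩ := h
  simp

theorem Nodup.exists_consecutive_consecutive {s : Cycle α} (hnd : s.Nodup) {v : α} (hv : v ∈ s)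
    (hs : 3 ≤ s.length) : ∃ p q, s.Consecutive p v ∧ s.Consecutive v q ∧ p ≠ q := by
  induction s using Quotient.inductionOn' with | h l => ?_
  simp only [mk''_eq_coe, mem_coe_iff, length_coe] at hnd hv hs
  obtain ⟨A, B, rfl⟩ := List.append_of_mem hv
  obtain ⟨q, m, p, hqmp⟩ : ∃ q m p, B ++ A = q :: (m ++ [p]) := by
    match h : B ++ A with
    | [] => simp_all
    | [_] => have := congrArg List.length h; simp at this hs; omega
    | q :: r :: t =>
      obtain ⟨m, p, hmp⟩ := List.eq_nil_or_concat (r :: t) |>.resolve_left (by simp)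
      exact ⟨q, m, p, by rw [hmp, List.concat_eq_append]⟩
  have hrep : ((A ++ v :: B : List α) : Cycle α) = (p :: v :: q :: m : List α) := by
    rw [coe_append_comm, List.cons_append, hqmp]
    simpa using coe_append_comm (v :: q :: m) [p]
  refine ⟨p, q, ⟨q :: m, hrep⟩, consecutive_of_eq_append (A := [p]) hrep, ?_⟩
  rw [hrep, nodup_coe_iff] at hnd
  simp_all

theorem exists_consecutive {s : Cycle α} (hs : 2 ≤ s.length) : ∃ a b, s.Consecutive a b := by
  induction s using Quotient.inductionOn' with | h l => ?_
  match l, hs with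
  | a :: b :: l, _ => exact ⟨a, b, l, rfl⟩

end Cycle

theorem StarFree.adj_of_not_adj_of_not_adj {G : SimpleGraph V} (h : StarFree G 3) {v x y z : V}
    (hx : G.Adj v x) (hy : G.Adj v y) (hz : G.Adj v z) (hxy : x ≠ y) (hxz : x ≠ z)
    (hyz : y ≠ z) (hxz' : ¬G.Adj x z) (hyz' : ¬G.Adj y z) : G.Adj x y := by
  classical
  by_contra hxy'
  refine h ⟨v, {x, y, z}, Finset.card_eq_three.2 ⟨x, y, z, hxy, hxz, hyz, rfl⟩, ?_, ?_, ?_⟩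
  · simp [hx.ne, hy.ne, hz.ne]
  · simp [hx, hy, hz]
  · simp only [Finset.mem_insert, Finset.mem_singleton]
    rintro l (rfl | rfl | rfl) m (rfl | rfl | rfl) hlm <;> simp_all [G.adj_comm]

namespace SimpleGraph

variable {G : SimpleGraph V}

/-- Unlike `Walk.IsCycle`, this admits the empty cycle and a single edge `[a, b]`. -/
def IsVertexCycle (G : SimpleGraph V) (s : Cycle V) : Prop :=
  s.Nodup ∧ s.Chain G.Adj

def IsLongestVertexCycle (G : SimpleGraph V) (s : Cycle V) : Prop :=
  G.IsVertexCycle s ∧ ∀ t, G.IsVertexCycle t → t.length ≤ s.length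

theorem isVertexCycle_coe_cons {a : V} {l : List V} :
    G.IsVertexCycle (a :: l : List V) ↔ (a :: l).Nodup ∧ (a :: (l ++ [a])).IsChain G.Adj :=
  and_congr Cycle.nodup_coe_iff (Cycle.chain_coe_cons _ _ _)

theorem IsVertexCycle.reverse {s : Cycle V} (hs : G.IsVertexCycle s) :
    G.IsVertexCycle s.reverse := by
  refine ⟨Cycle.nodup_reverse_iff.2 hs.1, ?_⟩
  have hch := hs.2
  induction s using Cycle.induction_on with
  | nil => trivial
  | cons a l _ =>
    rw [Cycle.reverse_coe, List.reverse_cons, ← Cycle.coe_cons_eq_coe_append,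
      Cycle.chain_coe_cons]
    rw [Cycle.chain_coe_cons] at hch
    have := List.isChain_reverse.2 (hch.imp fun _ _ h => h.symm)
    simpa using this

theorem IsVertexCycle.insert {a b u : V} {l : List V} (hs : G.IsVertexCycle (a :: b :: l : List V))
    (hu : u ∉ a :: b :: l) (hau : G.Adj a u) (hub : G.Adj u b) :
    G.IsVertexCycle (a :: u :: b :: l : List V) := by
  rw [isVertexCycle_coe_cons] at hs ⊢
  obtain ⟨hnd, hch⟩ := hs
  refine ⟨?_, ?_⟩
  · have : (u :: a :: b :: l).Nodup := List.nodup_cons.2 ⟨hu, hnd⟩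
    exact (List.Perm.swap a u _).nodup_iff.1 this
  · simp only [List.cons_append, List.isChain_cons_cons] at hch ⊢
    exact ⟨hau, hub, hch.2⟩

theorem IsVertexCycle.reroute {a b c u : V} {P Q : List V}
    (hs : G.IsVertexCycle (a :: (P ++ b :: c :: Q) : List V)) (hu : u ∉ a :: (P ++ b :: c :: Q))
    (hau : G.Adj a u) (hub : G.Adj u b) (hbP : ∀ p ∈ P.head?, G.Adj b p)
    (hPc : ∀ x ∈ P.getLast?, G.Adj x c) :
    G.IsVertexCycle (a :: u :: b :: (P ++ c :: Q) : List V) := by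
  rw [isVertexCycle_coe_cons] at hs ⊢
  obtain ⟨hnd, hch⟩ := hs
  refine ⟨?_, ?_⟩
  · have : (u :: a :: (P ++ b :: c :: Q)).Nodup := List.nodup_cons.2 ⟨hu, hnd⟩
    exact ((List.Perm.swap a u _).trans ((List.perm_middle.cons u).cons a)).nodup_iff.1 this
  · simp only [List.cons_append, List.append_assoc, List.isChain_append, List.isChain_cons,
      List.head?_cons] at hch ⊢
    refine ⟨by simpa using hau, by simpa using hub, ?_, hch.2.1, hch.2.2.1.2,
      by simpa using hPc⟩
    cases P with
    | nil => simpa using hch.2.2.1.1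
    | cons p P => simpa using hbP

theorem IsVertexCycle.adj_of_consecutive {s : Cycle V} {a b : V} (hs : G.IsVertexCycle s)
    (hab : s.Consecutive a b) : G.Adj a b := by
  obtain ⟨l, rfl⟩ := hab
  exact (List.isChain_cons_cons.1 (isVertexCycle_coe_cons.1 hs).2).1

theorem isVertexCycle_triangle {a b c : V} (hab : G.Adj a b) (hbc : G.Adj b c) (hca : G.Adj c a) :
    G.IsVertexCycle ([a, b, c] : List V) := by
  refine isVertexCycle_coe_cons.2 ⟨?_, ?_⟩
  · simp [hab.ne, hbc.ne, hca.ne.symm]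
  · simp [hab, hbc, hca]

theorem IsVertexCycle.length_le_card [Fintype V] {s : Cycle V} (hs : G.IsVertexCycle s) :
    s.length ≤ Fintype.card V := by
  induction s using Quotient.inductionOn' with
  | h l => exact (Cycle.nodup_coe_iff.1 hs.1).length_le_card

theorem exists_isLongestVertexCycle [Fintype V] (G : SimpleGraph V) :
    ∃ s, G.IsLongestVertexCycle s := by
  classical
  let P n := ∃ s, G.IsVertexCycle s ∧ s.length = n
  obtain ⟨s, hs, hlen⟩ : P (Nat.findGreatest P (Fintype.card V)) :=
    Nat.findGreatest_spec (P := P) (Nat.zero_le _)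
      ⟨Cycle.nil, ⟨Cycle.nodup_nil, Cycle.Chain.nil _⟩, rfl⟩
  exact ⟨s, hs, fun t ht => hlen ▸ Nat.le_findGreatest ht.length_le_card ⟨t, ht, rfl⟩⟩

theorem IsLongestVertexCycle.reverse {s : Cycle V} (hs : G.IsLongestVertexCycle s) :
    G.IsLongestVertexCycle s.reverse :=
  ⟨hs.1.reverse, fun t ht => (Cycle.length_reverse s).symm ▸ hs.2 t ht⟩

theorem IsLongestVertexCycle.not_adj_succ {s : Cycle V} {v q u : V}
    (hs : G.IsLongestVertexCycle s) (hvq : s.Consecutive v q) (hu : u ∉ s) (huv : G.Adj u v) :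
    ¬G.Adj u q := by
  obtain ⟨l, rfl⟩ := hvq
  rw [Cycle.mem_coe_iff] at hu
  intro huq
  have := hs.2 _ (hs.1.insert hu huv.symm huq)
  simp at this

theorem IsLongestVertexCycle.not_adj_pred {s : Cycle V} {p v u : V}
    (hs : G.IsLongestVertexCycle s) (hpv : s.Consecutive p v) (hu : u ∉ s) (huv : G.Adj u v) :
    ¬G.Adj u p :=
  hs.reverse.not_adj_succ hpv.reverse (Cycle.mem_reverse_iff.not.2 hu) huv

theorem IsLongestVertexCycle.adj_pred_succ (hclaw : StarFree G 3) {s : Cycle V} {p v q u : V}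
    (hs : G.IsLongestVertexCycle s) (hpv : s.Consecutive p v) (hvq : s.Consecutive v q)
    (hpq : p ≠ q) (hu : u ∉ s) (huv : G.Adj u v) : G.Adj p q :=
  hclaw.adj_of_not_adj_of_not_adj (hs.1.adj_of_consecutive hpv).symm
    (hs.1.adj_of_consecutive hvq) huv.symm hpq (ne_of_mem_of_not_mem hpv.left_mem hu)
    (ne_of_mem_of_not_mem hvq.right_mem hu) (fun h => hs.not_adj_pred hpv hu huv h.symm)
    (fun h => hs.not_adj_succ hvq hu huv h.symm)

theorem IsVertexCycle.hasHamCycle [Fintype V] {s : Cycle V} (hs : G.IsVertexCycle s)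
    (hspan : ∀ v, v ∈ s) (hlen : 3 ≤ s.length) : HasHamCycle G := by
  induction s using Quotient.inductionOn' with | h l => ?_
  obtain _ | ⟨a, l⟩ := l
  · exact absurd hlen (by simp)
  obtain ⟨hnd, hch⟩ := isVertexCycle_coe_cons.1 hs
  have hcard : Fintype.card V = l.length + 1 := by
    classical
    rw [← Finset.card_univ, ← Finset.eq_univ_of_forall fun v => List.mem_toFinset.2
      (Cycle.mem_coe_iff.1 (hspan v)), List.toFinset_card_of_nodup hnd, List.length_cons]
  obtain ⟨p, hp⟩ : ∃ p : G.Walk a a, p.support = a :: (l ++ [a]) :=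
    ⟨(Walk.ofSupport _ (List.cons_ne_nil _ _) hch).copy rfl (by simp),
      (Walk.support_copy _ _ _).trans (Walk.support_ofSupport _ _)⟩
  have hplen : p.length = l.length + 1 := by
    simpa [hp] using p.length_support.symm
  let _ : DecidableEq V := Classical.decEq V
  refine ⟨a, p, Walk.isHamiltonianCycle_iff_isCycle_and_length_eq.2
    ⟨?_, hplen.trans hcard.symm⟩⟩
  refine Walk.isCycle_iff_isPath_tail_and_le_length.2 ⟨?_, ?_⟩
  · rw [Walk.isPath_def, Walk.support_tail_of_not_nil _ (Walk.not_nil_iff_lt_length.2 (by omega)),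
      hp]
    exact (List.perm_append_singleton a l).nodup_iff.2 hnd
  · simpa [hplen] using hlen

end SimpleGraph

theorem HasHamCycle.twoConnected [Fintype V] {G : SimpleGraph V} (h : HasHamCycle G) :
    TwoConnected G := by
  let _ : DecidableEq V := Classical.decEq V
  obtain ⟨a, p, hp⟩ := h
  refine ⟨hp.length_eq ▸ hp.isCycle.three_le_length, fun v => ?_⟩
  have hq := (hp.rotate (hp.mem_support v)).isHamiltonian_tail
  set q := (p.rotate v (hp.mem_support v)).tail
  have hq_nil : ¬q.Nil := by
    have := (hp.rotate (hp.mem_support v)).isCycle.three_le_length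
    rw [Walk.not_nil_iff_lt_length, Walk.length_tail]
    omega
  have hcat : q.support.dropLast ++ [v] = q.support := by
    rw [← Walk.support_dropLast hq_nil]
    exact Walk.support_dropLast_concat hq_nil
  have hsupp : {x | x ∈ q.dropLast.support} = ({v} : Set V)ᶜ := by
    ext x
    have hx := hq x
    rw [← hcat, List.count_append] at hx
    rw [Set.mem_ofPred_eq, Walk.support_dropLast hq_nil, Set.mem_compl_singleton_iff]
    by_cases hxv : x = v
    · subst hxv
      simpa [List.count_eq_zero] using hx
    · simp only [List.count_singleton, beq_iff_eq, Ne.symm hxv, if_false] at hx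
      simp only [add_zero] at hx
      simpa [hxv, ← List.count_pos_iff] using hx.ge
  rw [← hsupp]
  exact q.dropLast.connected_induce_support

theorem TwoConnected.exists_adj_ne [Fintype V] {G : SimpleGraph V} (h : TwoConnected G) {v w : V}
    (hvw : v ≠ w) : ∃ y, G.Adj v y ∧ y ≠ w := by
  have : Nontrivial ({w}ᶜ : Set V) := by
    classical
    rw [← Fintype.one_lt_card_iff_nontrivial, Fintype.card_compl_set, Set.card_singleton]
    have := h.1
    omega
  obtain ⟨y, hy⟩ := (h.2 w).preconnected.exists_adj_of_nontrivial ⟨v, hvw⟩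
  exact ⟨y, hy, y.2⟩

theorem TwoConnected.exists_adj_adj [Fintype V] {G : SimpleGraph V} (h : TwoConnected G) (v : V) :
    ∃ y z, y ≠ z ∧ G.Adj v y ∧ G.Adj v z := by
  have : Nontrivial V := Fintype.one_lt_card_iff_nontrivial.1 (by have := h.1; omega)
  obtain ⟨w, hw⟩ := exists_ne v
  obtain ⟨y, hy, -⟩ := h.exists_adj_ne hw.symm
  obtain ⟨z, hz, hzy⟩ := h.exists_adj_ne hy.ne
  exact ⟨y, z, hzy.symm, hy, hz⟩

namespace SplitPartition

variable {G : SimpleGraph V} {K I : Set V}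

theorem mem_clique_or_mem_indep (h : SplitPartition G K I) (v : V) : v ∈ K ∨ v ∈ I :=
  Set.mem_union v K I |>.1 (h.2.1 ▸ Set.mem_univ v)

theorem adj (h : SplitPartition G K I) {x y : V} (hx : x ∈ K) (hy : y ∈ K) (hxy : x ≠ y) :
    G.Adj x y :=
  h.2.2.1 hx hy hxy

theorem mem_clique_of_adj (h : SplitPartition G K I) {x y : V} (hxy : G.Adj x y) (hx : x ∈ I) :
    y ∈ K :=
  (h.mem_clique_or_mem_indep y).resolve_right (h.2.2.2 hx · hxy)

theorem mem_clique_or_mem_clique_of_adj (h : SplitPartition G K I) {x y : V} (hxy : G.Adj x y) :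
    x ∈ K ∨ y ∈ K :=
  (h.mem_clique_or_mem_indep x).imp_right (h.mem_clique_of_adj hxy)

theorem mem_of_isLongestVertexCycle_of_mem_clique (h : SplitPartition G K I)
    (hclaw : StarFree G 3) {s : Cycle V} (hs : G.IsLongestVertexCycle s) (hlen : 3 ≤ s.length)
    {w : V} (hw : w ∈ K) : w ∈ s := by
  by_contra hws
  obtain ⟨k, hks, hk⟩ : ∃ k ∈ s, k ∈ K := by
    obtain ⟨a, b, hab⟩ := Cycle.exists_consecutive (by omega : 2 ≤ s.length)
    rcases h.mem_clique_or_mem_clique_of_adj (hs.1.adj_of_consecutive hab) with ha | hb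
    exacts [⟨a, hab.left_mem, ha⟩, ⟨b, hab.right_mem, hb⟩]
  obtain ⟨x, c, hxk, hkc, hxc⟩ := hs.1.1.exists_consecutive_consecutive hks hlen
  have hwk : G.Adj w k := h.adj hw hk (ne_of_mem_of_not_mem hks hws).symm
  have hwx := hs.not_adj_pred hxk hws hwk
  have hwc := hs.not_adj_succ hkc hws hwk
  have hxI : x ∈ I := (h.mem_clique_or_mem_indep x).resolve_left fun hx =>
    hwx (h.adj hw hx (ne_of_mem_of_not_mem hxk.left_mem hws).symm)
  have hcI : c ∈ I := (h.mem_clique_or_mem_indep c).resolve_left fun hc =>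
    hwc (h.adj hw hc (ne_of_mem_of_not_mem hkc.right_mem hws).symm)
  exact h.2.2.2 hxI hcI (hs.adj_pred_succ hclaw hxk hkc hxc hws hwk)

theorem not_adj_of_succ_mem_clique (h : SplitPartition G K I) (hclaw : StarFree G 3)
    {s : Cycle V} (hs : G.IsLongestVertexCycle s) {u k₁ k₂ q : V} (hu : u ∉ s)
    (huk₂ : G.Adj u k₂) (hk₂q : s.Consecutive k₂ q) (hq : q ∈ K) (hk₁ : k₁ ∈ K)
    (hk₁s : k₁ ∈ s) (hk₁₂ : k₁ ≠ k₂) : ¬G.Adj u k₁ := by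
  intro huk₁
  have huq := hs.not_adj_succ hk₂q hu huk₂
  obtain ⟨m, rfl⟩ := hk₂q
  have hk₁m : k₁ ∈ m := by
    rw [Cycle.mem_coe_iff] at hk₁s
    rcases hk₁s with _ | ⟨_, _ | ⟨_, hk₁m⟩⟩
    exacts [absurd rfl hk₁₂, absurd huk₁ huq, hk₁m]
  obtain ⟨A, R, rfl⟩ := List.append_of_mem hk₁m
  rcases R with _ | ⟨c, Q⟩
  · exact hs.not_adj_pred (Cycle.consecutive_of_eq_cons_append (A := q :: A) rfl) hu huk₂ huk₁
  have hnd : ((q :: A) ++ k₁ :: c :: Q).Nodup :=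
    (List.nodup_cons.1 (Cycle.nodup_coe_iff.1 hs.1.1)).2
  have hpred : ∀ x ∈ (q :: A).getLast?, G.Adj x c := by
    intro x hx
    obtain ⟨A', hA'⟩ := List.getLast?_eq_some_iff.1 hx
    have hxk₁ : Cycle.Consecutive (k₂ :: q :: (A ++ k₁ :: c :: Q) : List V) x k₁ :=
      Cycle.consecutive_of_eq_append (A := k₂ :: A') (B := c :: Q) <| by
        rw [show q :: (A ++ k₁ :: c :: Q) = (q :: A) ++ k₁ :: c :: Q from rfl, hA']
        simp
    have hk₁c : Cycle.Consecutive (k₂ :: q :: (A ++ k₁ :: c :: Q) : List V) k₁ c :=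
      Cycle.consecutive_of_eq_append (A := k₂ :: q :: A) rfl
    have hxc : x ≠ c := fun hxc =>
      List.disjoint_of_nodup_append hnd (List.mem_of_getLast? hx) (by simp [hxc])
    exact hs.adj_pred_succ hclaw hxk₁ hk₁c hxc hu huk₁
  have hlonger := hs.2 _ <| hs.1.reroute (P := q :: A) (Cycle.mem_coe_iff.not.1 hu) huk₂.symm
    huk₁ (by simpa using h.adj hk₁ hq fun h => huq (h ▸ huk₁)) hpred
  simp only [Cycle.length_coe, List.length_cons, List.length_append] at hlonger
  omega

theorem mem_of_isLongestVertexCycle (h : SplitPartition G K I) (hclaw : StarFree G 3)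
    (hdeg : ∀ v ∈ I, ∃ y z, y ≠ z ∧ G.Adj v y ∧ G.Adj v z) {s : Cycle V}
    (hs : G.IsLongestVertexCycle s) (hlen : 3 ≤ s.length) (v : V) : v ∈ s := by
  by_contra hv
  have hvI : v ∈ I := (h.mem_clique_or_mem_indep v).resolve_left fun hvK =>
    hv (h.mem_of_isLongestVertexCycle_of_mem_clique hclaw hs hlen hvK)
  obtain ⟨k₁, k₂, hk₁₂, hvk₁, hvk₂⟩ := hdeg v hvI
  have hk₁ := h.mem_clique_of_adj hvk₁ hvI
  have hk₁s := h.mem_of_isLongestVertexCycle_of_mem_clique hclaw hs hlen hk₁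
  have hk₂s := h.mem_of_isLongestVertexCycle_of_mem_clique hclaw hs hlen
    (h.mem_clique_of_adj hvk₂ hvI)
  obtain ⟨p, q, hpk₂, hk₂q, hpq⟩ := hs.1.1.exists_consecutive_consecutive hk₂s hlen
  rcases h.mem_clique_or_mem_clique_of_adj (hs.adj_pred_succ hclaw hpk₂ hk₂q hpq hv hvk₂)
    with hp | hq
  · exact h.not_adj_of_succ_mem_clique hclaw hs.reverse (Cycle.mem_reverse_iff.not.2 hv) hvk₂
      hpk₂.reverse hp hk₁ (Cycle.mem_reverse_iff.2 hk₁s) hk₁₂ hvk₁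
  · exact h.not_adj_of_succ_mem_clique hclaw hs hv hvk₂ hk₂q hq hk₁ hk₁s hk₁₂ hvk₁

theorem exists_isVertexCycle_three_le_length [Fintype V] (h : SplitPartition G K I)
    (hcard : 3 ≤ Fintype.card V)
    (hdeg : ∀ v ∈ I, ∃ y z, y ≠ z ∧ G.Adj v y ∧ G.Adj v z) :
    ∃ s, G.IsVertexCycle s ∧ 3 ≤ s.length := by
  rcases I.eq_empty_or_nonempty with hI | ⟨i, hi⟩
  · obtain ⟨a, b, c, hab, hac, hbc⟩ := Fintype.two_lt_card_iff.1 hcard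
    have hK : ∀ v, v ∈ K := fun v => (h.mem_clique_or_mem_indep v).resolve_right (hI ▸ id)
    exact ⟨_, isVertexCycle_triangle (h.adj (hK a) (hK b) hab) (h.adj (hK b) (hK c) hbc)
      (h.adj (hK c) (hK a) hac.symm), le_rfl⟩
  · obtain ⟨y, z, hyz, hy, hz⟩ := hdeg i hi
    exact ⟨_, isVertexCycle_triangle hy
      (h.adj (h.mem_clique_of_adj hy hi) (h.mem_clique_of_adj hz hi) hyz) hz.symm, le_rfl⟩

theorem hasHamCycle [Fintype V] (h : SplitPartition G K I) (hclaw : StarFree G 3)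
    (hcard : 3 ≤ Fintype.card V)
    (hdeg : ∀ v ∈ I, ∃ y z, y ≠ z ∧ G.Adj v y ∧ G.Adj v z) :
    HasHamCycle G := by
  obtain ⟨s, hs⟩ := G.exists_isLongestVertexCycle
  obtain ⟨t, ht, htlen⟩ := h.exists_isVertexCycle_three_le_length hcard hdeg
  have hlen : 3 ≤ s.length := htlen.trans (hs.2 t ht)
  exact hs.1.hasHamCycle (h.mem_of_isLongestVertexCycle hclaw hdeg hs hlen) hlen

end SplitPartition

/-- A claw-free (`K_{1,3}`-free) split graph has a Hamiltonian cycle iff it is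
2-connected. -/
theorem clawfree_split_hamiltonian_iff_twoConnected [Fintype V]
    (G : SimpleGraph V) (K I : Set V) (hsplit : SplitPartition G K I)
    (hclaw : StarFree G 3) :
    HasHamCycle G ↔ TwoConnected G :=
  ⟨HasHamCycle.twoConnected,
    fun h => hsplit.hasHamCycle hclaw h.1 fun v _ => h.exists_adj_adj v⟩
end

section
/- Let G be a 2-connected K_{1,4}-free split graph with Δ^I = 2 that contains a short cycle D. Then G is not Hamiltonian; indeed, deleting S = V(D) ∩ K leaves more than |S| connected components. -/
open SimpleGraph

variable {V : Type*}

/-- `K` is a maximum clique of `G`. -/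
def MaxClique (G : SimpleGraph V) (K : Set V) : Prop :=
  G.IsClique K ∧ ∀ K' : Set V, G.IsClique K' → K'.ncard ≤ K.ncard

/-- The bipartite subgraph `H` of `G` on `V_a = {u ∈ I : deg u = 2}` and
`V_b = N(V_a)`: its edges are exactly the edges of `G` incident to a degree-2
vertex of `I`. -/
def shortSub (G : SimpleGraph V) (I : Set V) : SimpleGraph V where
  Adj x y := G.Adj x y ∧
    ((x ∈ I ∧ (G.neighborSet x).ncard = 2) ∨ (y ∈ I ∧ (G.neighborSet y).ncard = 2))
  symm := ⟨fun x y h => ⟨h.1.symm, h.2.symm⟩⟩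
  loopless := ⟨fun x h => G.irrefl h.1⟩

/-- `G` has a short cycle: an induced cycle in the bipartite subgraph
`shortSub G I` missing at least one vertex of `K`. -/
def HasShortCycle (G : SimpleGraph V) (K I : Set V) : Prop :=
  ∃ (n : ℕ) (f : cycleGraph n ↪g shortSub G I), 3 ≤ n ∧ ∃ k ∈ K, k ∉ Set.range ⇑f

/-! Every edge of `shortSub G I` joins a degree-two vertex of `I` to a vertex of `K`, so the
short cycle `D` alternates between `A = V(D) ∩ I` and `S = V(D) ∩ K`, whence `|S| ≤ |A|`. The two
neighbours of a vertex of `A` are its two neighbours on `D`, both in `S`; so in `G - S` each vertex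
of `A` is a component by itself, and a vertex of `K` missed by `D` lies in yet another one. On the
other hand, removing `S` cuts a Hamiltonian cycle into at most `|S|` arcs, each of which lies in a
single component. -/

namespace SimpleGraph

variable {G : SimpleGraph V}

theorem cycleGraph_adj_add_one {m : ℕ} (i : Fin (m + 2)) :
    (cycleGraph (m + 2)).Adj i (i + 1) :=
  cycleGraph_adj.mpr (Or.inr (add_sub_cancel_left i 1))

theorem ncard_neighborSet_cycleGraph {m : ℕ} (i : Fin (m + 3)) :
    ((cycleGraph (m + 3)).neighborSet i).ncard = 2 := by
  rw [← Nat.card_coe_set_eq, Nat.card_eq_fintype_card, card_neighborSet_eq_degree,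
    cycleGraph_degree_three_le]

theorem Embedding.neighborSet_eq_image_of_ncard_le [Finite V] {W : Type*}
    {H : SimpleGraph V} {C : SimpleGraph W} (φ : C ↪g H) (hHG : H ≤ G) {v : W}
    (hv : (G.neighborSet (φ v)).ncard ≤ (C.neighborSet v).ncard) :
    G.neighborSet (φ v) = φ '' C.neighborSet v := by
  refine (Set.eq_of_subset_of_ncard_le ?_ ?_ (Set.toFinite _)).symm
  · rintro _ ⟨w, hw, rfl⟩
    exact hHG (φ.map_rel_iff.mpr hw)
  · rwa [Set.ncard_image_of_injective _ φ.injective]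

/-- Each component of `G - S` met by the walk is left for the last time by a step into `S`. -/
theorem Walk.ncard_image_connectedComponentMk_le_countP {S : Set V} [DecidablePred (· ∈ S)]
    [Finite V] {u v : V} (w : G.Walk u v) (hv : v ∈ S) :
    ((G.induce Sᶜ).connectedComponentMk '' {x : ↥Sᶜ | ↑x ∈ w.support}).ncard ≤
      w.support.tail.countP (· ∈ S) := by
  induction w with
  | @nil z =>
    have : {x : ↥Sᶜ | ↑x ∈ (nil : G.Walk z z).support} = ∅ :=
      Set.eq_empty_of_forall_notMem fun x hx => x.2 (List.mem_singleton.mp hx ▸ hv)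
    simp only [this, Set.image_empty, Set.ncard_empty, zero_le]
  | @cons x y _ hxy w ih =>
    set mk := (G.induce Sᶜ).connectedComponentMk
    set comps := mk '' {z : ↥Sᶜ | ↑z ∈ w.support}
    have hcount : (cons hxy w).support.tail.countP (· ∈ S) =
        w.support.tail.countP (· ∈ S) + if y ∈ S then 1 else 0 := by
      rw [support_cons, List.tail_cons, ← w.cons_tail_support, List.countP_cons, List.tail_cons]
      simp
    have hmem : ∀ z ∈ {z : ↥Sᶜ | ↑z ∈ (cons hxy w).support}, ↑z = x ∨ mk z ∈ comps := by
      intro z hz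
      exact (List.mem_cons.mp hz).imp_right fun hz => ⟨z, hz, rfl⟩
    by_cases hx : x ∈ S
    · have hsub : mk '' {z : ↥Sᶜ | ↑z ∈ (cons hxy w).support} ⊆ comps := by
        rintro _ ⟨z, hz, rfl⟩
        exact (hmem z hz).resolve_left fun h => z.2 (h ▸ hx)
      grw [Set.ncard_le_ncard hsub, ih hv, hcount]
      omega
    have hsub : mk '' {z : ↥Sᶜ | ↑z ∈ (cons hxy w).support} ⊆ insert (mk ⟨x, hx⟩) comps := by
      rintro _ ⟨z, hz, rfl⟩
      exact (hmem z hz).imp_left fun h => congrArg mk (Subtype.ext h)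
    by_cases hy : y ∈ S
    · grw [Set.ncard_le_ncard hsub, Set.ncard_insert_le, ih hv, hcount, if_pos hy]
    · have hxC : mk ⟨x, hx⟩ ∈ comps :=
        ⟨⟨y, hy⟩, w.start_mem_support, ConnectedComponent.eq.mpr (Adj.reachable hxy.symm)⟩
      grw [Set.ncard_le_ncard hsub, Set.insert_eq_of_mem hxC, ih hv, hcount]
      omega

theorem Walk.IsHamiltonianCycle.card_connectedComponent_induce_compl_le [Fintype V]
    [DecidableEq V] {a : V} {p : G.Walk a a} (hp : p.IsHamiltonianCycle) {S : Set V}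
    (hS : S.Nonempty) : Nat.card (G.induce Sᶜ).ConnectedComponent ≤ S.ncard := by
  classical
  obtain ⟨s, hs⟩ := hS
  set q := p.rotate s (hp.mem_support s)
  have hq : q.IsHamiltonianCycle := hp.rotate _
  have hall : {x : ↥Sᶜ | ↑x ∈ q.support} = Set.univ :=
    Set.eq_univ_of_forall fun x => hq.mem_support x
  have hcount : q.support.tail.countP (· ∈ S) = S.ncard := by
    rw [← q.support_tail_of_not_nil hq.not_nil,
      ← hq.isHamiltonian_tail.isPath.support_nodup.card_eq_countP,
      hq.isHamiltonian_tail.toFinset_support, Set.ncard_eq_toFinset_card']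
    simp
  have := q.ncard_image_connectedComponentMk_le_countP hs
  rwa [hall, Set.image_univ_of_surjective (f := (G.induce Sᶜ).connectedComponentMk)
    Quot.mk_surjective, Set.ncard_univ, hcount] at this

theorem IsIsolated.eq_of_reachable {v w : V} (hv : G.IsIsolated v) (h : G.Reachable v w) :
    v = w := by
  obtain ⟨p⟩ := h
  cases p with
  | nil => rfl
  | cons hadj _ => exact (hv _ hadj).elim

theorem isIsolated_induce_compl {S : Set V} {x : V} (hxS : x ∉ S) (hx : G.neighborSet x ⊆ S) :
    (G.induce Sᶜ).IsIsolated ⟨x, hxS⟩ :=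
  fun y hy => y.2 (hx hy)

theorem ncard_lt_card_connectedComponent_induce_compl [Finite V] {S T : Set V}
    (hT : ∀ x ∈ T, x ∉ S ∧ G.neighborSet x ⊆ S) {k : V} (hkS : k ∉ S) (hkT : k ∉ T) :
    T.ncard < Nat.card (G.induce Sᶜ).ConnectedComponent := by
  have hcompl : ∀ x ∈ insert k T, x ∉ S := by
    rintro x (rfl | hx)
    exacts [hkS, (hT x hx).1]
  have hreach : ∀ x (hx : x ∈ T) (y : ↥Sᶜ), (G.induce Sᶜ).Reachable ⟨x, (hT x hx).1⟩ y → x = y :=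
    fun x hx y h => congrArg Subtype.val ((isIsolated_induce_compl _ (hT x hx).2).eq_of_reachable h)
  let φ : ↥(insert k T) → (G.induce Sᶜ).ConnectedComponent :=
    fun x => (G.induce Sᶜ).connectedComponentMk ⟨x, hcompl x x.2⟩
  have hφ : φ.Injective := by
    rintro ⟨x, hx⟩ ⟨y, hy⟩ hxy
    have h := ConnectedComponent.exact hxy
    refine Subtype.ext ?_
    rcases hx with rfl | hx
    · rcases hy with rfl | hy
      exacts [rfl, (hreach y hy _ h.symm).symm]
    · exact hreach x hx _ h
  calc T.ncard < (insert k T).ncard := by rw [Set.ncard_insert_of_notMem hkT]; omega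
    _ = Nat.card ↥(insert k T) := (Nat.card_coe_set_eq _).symm
    _ ≤ _ := Nat.card_le_card_of_injective φ hφ

end SimpleGraph

theorem SplitPartition.mem_clique_of_notMem_indep {G : SimpleGraph V} {K I : Set V}
    (h : SplitPartition G K I) {x : V} (hx : x ∉ I) : x ∈ K :=
  ((h.2.1 ▸ Set.mem_univ x : x ∈ K ∪ I)).resolve_right hx

theorem SplitPartition.mem_clique_of_adj_s9 {G : SimpleGraph V} {K I : Set V}
    (h : SplitPartition G K I) {x y : V} (hx : x ∈ I) (hxy : G.Adj x y) : y ∈ K :=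
  h.mem_clique_of_notMem_indep fun hy => h.2.2.2 hx hy hxy

section ShortCycle

variable {G : SimpleGraph V} {I : Set V}

theorem shortSub_le : shortSub G I ≤ G :=
  fun _ _ h => h.1

theorem shortSub_adj_mem_of_notMem {x y : V} (h : (shortSub G I).Adj x y) (hx : x ∉ I) :
    y ∈ I :=
  (h.2.resolve_left fun h' => hx h'.1).1

theorem IndepOn.ncard_neighborSet_of_shortSub_adj (hI : IndepOn G I) {x y : V}
    (h : (shortSub G I).Adj x y) (hx : x ∈ I) : (G.neighborSet x).ncard = 2 :=
  (h.2.resolve_right fun hy => hI hx hy.1 h.1).2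

variable {m : ℕ} (f : cycleGraph (m + 3) ↪g shortSub G I)

theorem cycle_succ_mem_of_notMem {i : Fin (m + 3)} (hi : f i ∉ I) : f (i + 1) ∈ I :=
  shortSub_adj_mem_of_notMem (f.map_rel_iff.mpr (cycleGraph_adj_add_one i)) hi

theorem neighborSet_cycle_subset_range [Finite V] (hI : IndepOn G I) {i : Fin (m + 3)}
    (hi : f i ∈ I) : G.neighborSet (f i) ⊆ Set.range f := by
  have hdeg :=
    hI.ncard_neighborSet_of_shortSub_adj (f.map_rel_iff.mpr (cycleGraph_adj_add_one i)) hi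
  rw [f.neighborSet_eq_image_of_ncard_le shortSub_le (by rw [hdeg, ncard_neighborSet_cycleGraph])]
  exact Set.image_subset_range _ _

theorem ncard_range_inter_le_of_disjoint {K : Set V} (hKI : Disjoint K I) :
    (Set.range f ∩ K).ncard ≤ (Set.range f ∩ I).ncard := by
  simp only [Set.inter_comm (Set.range f), ← Set.image_preimage_eq_inter_range,
    Set.ncard_image_of_injective _ f.injective]
  refine Set.ncard_le_ncard_of_injOn (· + 1) ?_ (add_left_injective 1).injOn (Set.toFinite _)
  exact fun i hi => cycle_succ_mem_of_notMem f (Set.disjoint_left.mp hKI hi)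

end ShortCycle

theorem shortCycle_not_hamiltonian_general [Fintype V] (G : SimpleGraph V)
    (K I : Set V) (hsplit : SplitPartition G K I)
    (n : ℕ) (hn : 3 ≤ n) (f : cycleGraph n ↪g shortSub G I)
    (hmiss : ∃ k ∈ K, k ∉ Set.range ⇑f) :
    (Set.range ⇑f ∩ K).ncard <
      Nat.card ((G.induce ((Set.range ⇑f ∩ K)ᶜ : Set V)).ConnectedComponent) ∧
    ¬ HasHamCycle G := by
  classical
  obtain ⟨m, rfl⟩ := Nat.exists_eq_add_of_le' hn
  obtain ⟨k, -, hkf⟩ := hmiss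
  set S := Set.range f ∩ K
  have hisolated : ∀ x ∈ Set.range f ∩ I, x ∉ S ∧ G.neighborSet x ⊆ S := by
    rintro _ ⟨⟨i, rfl⟩, hi⟩
    exact ⟨fun hS => Set.disjoint_left.mp hsplit.1 hS.2 hi, fun y hy =>
      ⟨neighborSet_cycle_subset_range f hsplit.2.2.2 hi hy, hsplit.mem_clique_of_adj_s9 hi hy⟩⟩
  have hcomp : S.ncard < Nat.card (G.induce Sᶜ).ConnectedComponent :=
    (ncard_range_inter_le_of_disjoint f hsplit.1).trans_lt
      (ncard_lt_card_connectedComponent_induce_compl hisolated (hkf ·.1) (hkf ·.1))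
  have hS : S.Nonempty := by
    by_cases h0 : f 0 ∈ I
    · have hadj := shortSub_le (f.map_rel_iff.mpr (cycleGraph_adj_add_one 0))
      exact ⟨f (0 + 1), Set.mem_range_self _, hsplit.mem_clique_of_adj_s9 h0 hadj⟩
    · exact ⟨f 0, Set.mem_range_self _, hsplit.mem_clique_of_notMem_indep h0⟩
  exact ⟨hcomp, fun ⟨_, _, hp⟩ => (hp.card_connectedComponent_induce_compl_le hS).not_gt hcomp⟩

/-- If a 2-connected `K_{1,4}`-free split graph with `Δ^I = 2` contains a short
cycle `D`, then deleting `S = V(D) ∩ K` leaves more than `|S|` components, and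
`G` is not Hamiltonian. -/
theorem shortCycle_not_hamiltonian [Fintype V] (G : SimpleGraph V)
    (K I : Set V) (hsplit : SplitPartition G K I) (hmax : MaxClique G K)
    (h2 : TwoConnected G) (hfree : StarFree G 4)
    (hub : ∀ v ∈ K, (G.neighborSet v ∩ I).ncard ≤ 2)
    (hex : ∃ v ∈ K, (G.neighborSet v ∩ I).ncard = 2)
    (n : ℕ) (hn : 3 ≤ n) (f : cycleGraph n ↪g shortSub G I)
    (hmiss : ∃ k ∈ K, k ∉ Set.range ⇑f) :
    (Set.range ⇑f ∩ K).ncard <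
      Nat.card ((G.induce ((Set.range ⇑f ∩ K)ᶜ : Set V)).ConnectedComponent) ∧
    ¬ HasHamCycle G :=
  shortCycle_not_hamiltonian_general G K I hsplit n hn f hmiss
end

section
/- Let G be a 2-connected K_{1,4}-free split graph with maximum clique K, |K| ≥ |I| ≥ 8, Δ^I = 3, no short cycles, and let 𝕮 be the collection of maximal alternating paths in G − N^I(v) for v ∈ K with |N(v)∩I| = 3. Then 𝕮 contains at most two paths on 7 vertices, and if it contains two paths on 7 vertices then it contains no path on 5 vertices. -/
/-!
Put `A = N(v) ∩ I`. As `G` is `K_{1,4}`-free, every clique vertex other than a clique vertex `c`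
sees one of any three independent neighbours of `c`. Applied at `v`, every inner clique vertex of
a path has a neighbour in `A`; applied at the inner clique vertices themselves, together with the
bound of three independent neighbours, it forces the inner clique vertices of disjoint paths to
share one neighbour `a ∈ A`. By maximality of `K` some clique vertex `k` misses `a`; then `k` sees
the middle independent vertex of each 7-vertex path and an independent vertex of the third path
(a 5-vertex path, or a 7-vertex one cut short), and these three vertices together with `v` are
the leaves of an induced `K_{1,4}` centred at `k`.
-/

open SimpleGraph

variable {V : Type*}

/-- `(w, x)` describes an alternating path `w 0, x 0, w 1, x 1, …, w (j-1)`
in `G - A` with the `j` vertices `w i` in `K` and the `j - 1` vertices `x i`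
in `I`, all distinct and avoiding `A`. -/
def IsAltPath (G : SimpleGraph V) (K I A : Set V) (j : ℕ) (w x : ℕ → V) : Prop :=
  2 ≤ j ∧
  (∀ i < j, w i ∈ K ∧ w i ∉ A) ∧
  (∀ i < j - 1, x i ∈ I ∧ x i ∉ A) ∧
  (∀ i < j, ∀ k < j, w i = w k → i = k) ∧
  (∀ i < j - 1, ∀ k < j - 1, x i = x k → i = k) ∧
  (∀ i < j, ∀ k < j - 1, w i ≠ x k) ∧
  (∀ i < j - 1, G.Adj (w i) (x i) ∧ G.Adj (w (i + 1)) (x i))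

/-- The vertex set of the alternating path `(w, x)` with `j` clique vertices. -/
def altPathVerts (j : ℕ) (w x : ℕ → V) : Set V :=
  {u | ∃ i < j, u = w i} ∪ {u | ∃ i < j - 1, u = x i}

section SplitGraph

variable {G : SimpleGraph V} {K I : Set V}

theorem SplitPartition.adj_of_starFree (hsplit : SplitPartition G K I) (hfree : StarFree G 4)
    {c k a b d : V} (hc : c ∈ K) (hk : k ∈ K) (hck : c ≠ k)
    (ha : a ∈ I) (hb : b ∈ I) (hd : d ∈ I) (hab : a ≠ b) (had : a ≠ d) (hbd : b ≠ d)
    (hca : G.Adj c a) (hcb : G.Adj c b) (hcd : G.Adj c d) :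
    G.Adj k a ∨ G.Adj k b ∨ G.Adj k d := by
  classical
  obtain ⟨hKI, -, hclique, hindep⟩ := hsplit
  have hkI : k ∉ I := Set.disjoint_left.1 hKI hk
  by_contra! hnot
  refine hfree ⟨c, {a, b, d, k}, Finset.card_eq_four.2 ⟨a, b, d, k, ?_⟩, ?_, ?_, ?_⟩
  · grind
  · simp only [Finset.mem_insert, Finset.mem_singleton, not_or]
    exact ⟨hca.ne, hcb.ne, hcd.ne, hck⟩
  · simp only [Finset.mem_insert, Finset.mem_singleton]
    rintro l (rfl | rfl | rfl | rfl) <;> first | assumption | exact hclique hc hk hck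
  · simp only [Finset.mem_insert, Finset.mem_singleton]
    rintro l (rfl | rfl | rfl | rfl) m (rfl | rfl | rfl | rfl) hlm <;>
      first
      | exact absurd rfl hlm
      | exact hindep (by assumption) (by assumption)
      | exact fun h => hnot.1 h.symm
      | exact fun h => hnot.2.1 h.symm
      | exact fun h => hnot.2.2 h.symm
      | exact hnot.1
      | exact hnot.2.1
      | exact hnot.2.2

theorem MaxClique.exists_not_adj [Finite V] (hmax : MaxClique G K) {u : V} (hu : u ∉ K) :
    ∃ k ∈ K, ¬ G.Adj k u := by
  by_contra! h
  have := hmax.2 _ (hmax.1.insert fun b hb _ => (h b hb).symm)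
  rw [Set.ncard_insert_of_notMem hu] at this
  omega

/-- An inner clique vertex `w` of an alternating path in `G - A`, with its two neighbours `y`, `z`
on the path. -/
structure IsInteriorVertex (G : SimpleGraph V) (K I A : Set V) (w y z : V) : Prop where
  mem : w ∈ K
  left_mem : y ∈ I \ A
  right_mem : z ∈ I \ A
  ne : y ≠ z
  adj_left : G.Adj w y
  adj_right : G.Adj w z

namespace IsInteriorVertex

variable {A : Set V} {w y z : V}

theorem adj_left_or_adj_right (hsplit : SplitPartition G K I) (hfree : StarFree G 4)
    (h : IsInteriorVertex G K I A w y z) {a k : V} (haI : a ∈ I) (haA : a ∈ A)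
    (hwa : G.Adj w a) (hk : k ∈ K) (hka : ¬ G.Adj k a) : G.Adj k y ∨ G.Adj k z := by
  have hay : y ≠ a := fun e => h.left_mem.2 (e ▸ haA)
  have haz : z ≠ a := fun e => h.right_mem.2 (e ▸ haA)
  have hwk : w ≠ k := by rintro rfl; exact hka hwa
  rcases hsplit.adj_of_starFree hfree h.mem hk hwk h.left_mem.1 h.right_mem.1 haI h.ne hay haz
    h.adj_left h.adj_right hwa with hky | hkz | hka'
  exacts [Or.inl hky, Or.inr hkz, absurd hka' hka]

section Center

variable {v : V}

theorem ne_center (h : IsInteriorVertex G K I (G.neighborSet v ∩ I) w y z) : w ≠ v := by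
  rintro rfl
  exact h.left_mem.2 ⟨h.adj_left, h.left_mem.1⟩

/-- Otherwise `v` would centre an induced `K_{1,4}` with leaves `N(v) ∩ I` and `w`. -/
theorem exists_adj (hsplit : SplitPartition G K I) (hfree : StarFree G 4) (hv : v ∈ K)
    (hdeg : (G.neighborSet v ∩ I).ncard = 3)
    (h : IsInteriorVertex G K I (G.neighborSet v ∩ I) w y z) :
    ∃ a ∈ G.neighborSet v ∩ I, G.Adj w a := by
  obtain ⟨a₁, a₂, a₃, h₁₂, h₁₃, h₂₃, hA⟩ := Set.ncard_eq_three.1 hdeg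
  have mem : ∀ a ∈ ({a₁, a₂, a₃} : Set V), a ∈ G.neighborSet v ∩ I := fun a ha => hA ▸ ha
  have ha₁ := mem a₁ (by simp)
  have ha₂ := mem a₂ (by simp)
  have ha₃ := mem a₃ (by simp)
  rcases hsplit.adj_of_starFree hfree hv h.mem h.ne_center.symm ha₁.2 ha₂.2 ha₃.2 h₁₂ h₁₃ h₂₃
    ha₁.1 ha₂.1 ha₃.1 with hw | hw | hw
  exacts [⟨a₁, ha₁, hw⟩, ⟨a₂, ha₂, hw⟩, ⟨a₃, ha₃, hw⟩]

/-- If `w'` saw `y`, then `y`, `y'`, `z'` and its own neighbour in `N(v) ∩ I` would be four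
independent neighbours of `w'`. -/
theorem adj_of_disjoint (hsplit : SplitPartition G K I) (hfree : StarFree G 4)
    (hub : ∀ u ∈ K, (G.neighborSet u ∩ I).ncard ≤ 3) [Finite V] (hv : v ∈ K)
    (hdeg : (G.neighborSet v ∩ I).ncard = 3) {w' y' z' a : V}
    (h : IsInteriorVertex G K I (G.neighborSet v ∩ I) w y z)
    (h' : IsInteriorVertex G K I (G.neighborSet v ∩ I) w' y' z')
    (hdisj : Disjoint ({w, y, z} : Set V) {w', y', z'})
    (ha : a ∈ G.neighborSet v ∩ I) (hwa : G.Adj w a) : G.Adj w' a := by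
  obtain ⟨a', ha', hw'a'⟩ := h'.exists_adj hsplit hfree hv hdeg
  have not_adj : ∀ u ∈ I \ (G.neighborSet v ∩ I), y' ≠ u → z' ≠ u → ¬ G.Adj w' u :=
    fun u hu hy'u hz'u hw'u => (hub w' h'.mem).not_gt ((Set.three_lt_ncard_iff).2
      ⟨y', z', a', u, ⟨h'.adj_left, h'.left_mem.1⟩, ⟨h'.adj_right, h'.right_mem.1⟩,
        ⟨hw'a', ha'.2⟩, ⟨hw'u, hu.1⟩, h'.ne, fun e => h'.left_mem.2 (e ▸ ha'), hy'u,
        fun e => h'.right_mem.2 (e ▸ ha'), hz'u, fun e => hu.2 (e ▸ ha')⟩)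
  by_contra hw'a
  rcases h.adj_left_or_adj_right hsplit hfree ha.2 ha hwa h'.mem hw'a with hy | hz
  · exact not_adj y h.left_mem (hdisj.ne_of_mem (by simp) (by simp)).symm
      (hdisj.ne_of_mem (by simp) (by simp)).symm hy
  · exact not_adj z h.right_mem (hdisj.ne_of_mem (by simp) (by simp)).symm
      (hdisj.ne_of_mem (by simp) (by simp)).symm hz

end Center

end IsInteriorVertex

end SplitGraph

section AltPath

variable {G : SimpleGraph V} {K I A : Set V} {j : ℕ} {w x : ℕ → V}

theorem IsAltPath.mono (h : IsAltPath G K I A j w x) {i : ℕ} (hi : 2 ≤ i) (hij : i ≤ j) :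
    IsAltPath G K I A i w x := by
  obtain ⟨-, hw, hx, hw_inj, hx_inj, hwx, hadj⟩ := h
  exact ⟨hi, fun k hk => hw k (by omega), fun k hk => hx k (by omega),
    fun k hk l hl => hw_inj k (by omega) l (by omega),
    fun k hk l hl => hx_inj k (by omega) l (by omega),
    fun k hk l hl => hwx k (by omega) l (by omega), fun k hk => hadj k (by omega)⟩

theorem altPathVerts_mono {i : ℕ} (hij : i ≤ j) (w x : ℕ → V) :
    altPathVerts i w x ⊆ altPathVerts j w x := by
  rintro u (⟨k, hk, rfl⟩ | ⟨k, hk, rfl⟩)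
  exacts [Or.inl ⟨k, by omega, rfl⟩, Or.inr ⟨k, by omega, rfl⟩]

theorem mem_altPathVerts_right (w x : ℕ → V) {i : ℕ} (hi : i < j - 1) :
    x i ∈ altPathVerts j w x :=
  Or.inr ⟨i, hi, rfl⟩

theorem insert_subset_altPathVerts (w x : ℕ → V) {i : ℕ} (hi : i + 2 < j) :
    ({w (i + 1), x i, x (i + 1)} : Set V) ⊆ altPathVerts j w x := by
  simp only [Set.insert_subset_iff, Set.singleton_subset_iff]
  exact ⟨Or.inl ⟨i + 1, by omega, rfl⟩, mem_altPathVerts_right w x (by omega),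
    mem_altPathVerts_right w x (by omega)⟩

theorem IsAltPath.right_ne (h : IsAltPath G K I A j w x) {i l : ℕ} (hi : i < j - 1)
    (hl : l < j - 1) (hil : i ≠ l) : x i ≠ x l :=
  fun e => hil (h.2.2.2.2.1 i hi l hl e)

theorem IsAltPath.isInteriorVertex (h : IsAltPath G K I A j w x) {i : ℕ} (hi : i + 2 < j) :
    IsInteriorVertex G K I A (w (i + 1)) (x i) (x (i + 1)) where
  mem := (h.2.1 (i + 1) (by omega)).1
  left_mem := h.2.2.1 i (by omega)
  right_mem := h.2.2.1 (i + 1) (by omega)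
  ne := h.right_ne (by omega) (by omega) (by omega)
  adj_left := (h.2.2.2.2.2.2 i (by omega)).2
  adj_right := (h.2.2.2.2.2.2 (i + 1) (by omega)).1

/-- If `k` missed `x 1`, it would see `x 0` and `x 2` besides `u₁` and `u₂`. -/
theorem IsAltPath.adj_middle [Finite V] (hsplit : SplitPartition G K I) (hfree : StarFree G 4)
    (hub : ∀ u ∈ K, (G.neighborSet u ∩ I).ncard ≤ 3) (h : IsAltPath G K I A 4 w x)
    {a k u₁ u₂ : V} (haI : a ∈ I) (haA : a ∈ A) (hw₁a : G.Adj (w 1) a) (hw₂a : G.Adj (w 2) a)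
    (hk : k ∈ K) (hka : ¬ G.Adj k a) (hu₁ : u₁ ∈ I) (hu₂ : u₂ ∈ I) (hu : u₁ ≠ u₂)
    (hku₁ : G.Adj k u₁) (hku₂ : G.Adj k u₂)
    (hu₁P : u₁ ∉ altPathVerts 4 w x) (hu₂P : u₂ ∉ altPathVerts 4 w x) : G.Adj k (x 1) := by
  have p₁ := h.isInteriorVertex (i := 0) (by norm_num)
  have p₂ := h.isInteriorVertex (i := 1) (by norm_num)
  have mem : ∀ i < 3, x i ∈ altPathVerts 4 w x := fun i hi =>
    mem_altPathVerts_right w x (by omega)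
  by_contra hkx₁
  have hkx₀ := (p₁.adj_left_or_adj_right hsplit hfree haI haA hw₁a hk hka).resolve_right hkx₁
  have hkx₂ := (p₂.adj_left_or_adj_right hsplit hfree haI haA hw₂a hk hka).resolve_left hkx₁
  exact (hub k hk).not_gt ((Set.three_lt_ncard_iff).2 ⟨x 0, x 2, u₁, u₂, ⟨hkx₀, p₁.left_mem.1⟩,
    ⟨hkx₂, p₂.right_mem.1⟩, ⟨hku₁, hu₁⟩, ⟨hku₂, hu₂⟩, h.right_ne (by norm_num) (by norm_num)
    (by norm_num), fun e => hu₁P (e ▸ mem 0 (by norm_num)), fun e => hu₂P (e ▸ mem 0 (by norm_num)),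
    fun e => hu₁P (e ▸ mem 2 (by norm_num)), fun e => hu₂P (e ▸ mem 2 (by norm_num)), hu⟩)

end AltPath

theorem false_of_disjoint_altPaths {G : SimpleGraph V} {K I : Set V} [Finite V]
    (hsplit : SplitPartition G K I) (hmax : MaxClique G K) (hfree : StarFree G 4)
    (hub : ∀ u ∈ K, (G.neighborSet u ∩ I).ncard ≤ 3) {v : V} (hv : v ∈ K)
    (hdeg : (G.neighborSet v ∩ I).ncard = 3) {w₁ x₁ w₂ x₂ s t : ℕ → V}
    (h₁ : IsAltPath G K I (G.neighborSet v ∩ I) 4 w₁ x₁)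
    (h₂ : IsAltPath G K I (G.neighborSet v ∩ I) 4 w₂ x₂)
    (hq : IsAltPath G K I (G.neighborSet v ∩ I) 3 s t)
    (d₁₂ : Disjoint (altPathVerts 4 w₁ x₁) (altPathVerts 4 w₂ x₂))
    (d₁q : Disjoint (altPathVerts 4 w₁ x₁) (altPathVerts 3 s t))
    (d₂q : Disjoint (altPathVerts 4 w₂ x₂) (altPathVerts 3 s t)) : False := by
  have p₁ := h₁.isInteriorVertex (i := 0) (by norm_num)
  have p₁' := h₁.isInteriorVertex (i := 1) (by norm_num)
  have p₂ := h₂.isInteriorVertex (i := 0) (by norm_num)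
  have p₂' := h₂.isInteriorVertex (i := 1) (by norm_num)
  have q := hq.isInteriorVertex (i := 0) (by norm_num)
  have m₁ := insert_subset_altPathVerts w₁ x₁ (i := 0) (j := 4) (by norm_num)
  have m₁' := insert_subset_altPathVerts w₁ x₁ (i := 1) (j := 4) (by norm_num)
  have m₂ := insert_subset_altPathVerts w₂ x₂ (i := 0) (j := 4) (by norm_num)
  have m₂' := insert_subset_altPathVerts w₂ x₂ (i := 1) (j := 4) (by norm_num)
  have mq := insert_subset_altPathVerts s t (i := 0) (j := 3) (by norm_num)
  obtain ⟨a, ha, hsa⟩ := q.exists_adj hsplit hfree hv hdeg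
  have sees_a : ∀ {w y z : V} {P : Set V},
      IsInteriorVertex G K I (G.neighborSet v ∩ I) w y z → {w, y, z} ⊆ P →
      Disjoint P (altPathVerts 3 s t) → G.Adj w a := fun p hP hd =>
    q.adj_of_disjoint hsplit hfree hub hv hdeg p (hd.symm.mono mq hP) ha hsa
  obtain ⟨k, hk, hka⟩ := hmax.exists_not_adj fun haK => Set.disjoint_left.1 hsplit.1 haK ha.2
  have hits : ∀ {w y z : V} {P : Set V},
      IsInteriorVertex G K I (G.neighborSet v ∩ I) w y z → {w, y, z} ⊆ P → G.Adj w a →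
      ∃ u ∈ P, u ∈ I \ (G.neighborSet v ∩ I) ∧ G.Adj k u := by
    intro w y z P p hP hwa
    rcases p.adj_left_or_adj_right hsplit hfree ha.2 ha hwa hk hka with hky | hkz
    exacts [⟨y, hP (by simp), p.left_mem, hky⟩, ⟨z, hP (by simp), p.right_mem, hkz⟩]
  obtain ⟨u, huQ, huI, hku⟩ := hits q mq hsa
  obtain ⟨u₁, hu₁P, hu₁I, hku₁⟩ := hits p₁ m₁ (sees_a p₁ m₁ d₁q)
  obtain ⟨u₂, hu₂P, hu₂I, hku₂⟩ := hits p₂ m₂ (sees_a p₂ m₂ d₂q)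
  have hkx₁ : G.Adj k (x₁ 1) := h₁.adj_middle hsplit hfree hub ha.2 ha (sees_a p₁ m₁ d₁q)
    (sees_a p₁' m₁' d₁q) hk hka huI.1 hu₂I.1 (d₂q.ne_of_mem hu₂P huQ).symm hku hku₂
    (Set.disjoint_right.1 d₁q huQ) (Set.disjoint_right.1 d₁₂ hu₂P)
  have hkx₂ : G.Adj k (x₂ 1) := h₂.adj_middle hsplit hfree hub ha.2 ha (sees_a p₂ m₂ d₂q)
    (sees_a p₂' m₂' d₂q) hk hka huI.1 hu₁I.1 (d₁q.ne_of_mem hu₁P huQ).symm hku hku₁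
    (Set.disjoint_right.1 d₂q huQ) (Set.disjoint_left.1 d₁₂ hu₁P)
  have mid₁ : x₁ 1 ∈ altPathVerts 4 w₁ x₁ := mem_altPathVerts_right w₁ x₁ (by norm_num)
  have mid₂ : x₂ 1 ∈ altPathVerts 4 w₂ x₂ := mem_altPathVerts_right w₂ x₂ (by norm_num)
  rcases hsplit.adj_of_starFree hfree hk hv (fun e => hka (e ▸ ha.1)) p₁.right_mem.1
    p₂.right_mem.1 huI.1 (d₁₂.ne_of_mem mid₁ mid₂) (d₁q.ne_of_mem mid₁ huQ)
    (d₂q.ne_of_mem mid₂ huQ) hkx₁ hkx₂ hku with hv₁ | hv₂ | hvu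
  exacts [p₁.right_mem.2 ⟨hv₁, p₁.right_mem.1⟩, p₂.right_mem.2 ⟨hv₂, p₂.right_mem.1⟩,
    huI.2 ⟨hvu, huI.1⟩]

theorem at_most_two_seven_vertex_paths_general [Fintype V] (G : SimpleGraph V)
    (K I : Set V) (hsplit : SplitPartition G K I) (hmax : MaxClique G K)
    (hfree : StarFree G 4)
    (hub : ∀ u ∈ K, (G.neighborSet u ∩ I).ncard ≤ 3)
    (v : V) (hv : v ∈ K) (hdeg : (G.neighborSet v ∩ I).ncard = 3) :
    (¬ ∃ (w₁ x₁ w₂ x₂ w₃ x₃ : ℕ → V),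
        IsAltPath G K I (G.neighborSet v ∩ I) 4 w₁ x₁ ∧
        IsAltPath G K I (G.neighborSet v ∩ I) 4 w₂ x₂ ∧
        IsAltPath G K I (G.neighborSet v ∩ I) 4 w₃ x₃ ∧
        Disjoint (altPathVerts 4 w₁ x₁) (altPathVerts 4 w₂ x₂) ∧
        Disjoint (altPathVerts 4 w₁ x₁) (altPathVerts 4 w₃ x₃) ∧
        Disjoint (altPathVerts 4 w₂ x₂) (altPathVerts 4 w₃ x₃)) ∧
    (∀ w₁ x₁ w₂ x₂ : ℕ → V,
        IsAltPath G K I (G.neighborSet v ∩ I) 4 w₁ x₁ →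
        IsAltPath G K I (G.neighborSet v ∩ I) 4 w₂ x₂ →
        Disjoint (altPathVerts 4 w₁ x₁) (altPathVerts 4 w₂ x₂) →
        ¬ ∃ (s t : ℕ → V), IsAltPath G K I (G.neighborSet v ∩ I) 3 s t ∧
            Disjoint (altPathVerts 4 w₁ x₁) (altPathVerts 3 s t) ∧
            Disjoint (altPathVerts 4 w₂ x₂) (altPathVerts 3 s t)) := by
  refine ⟨?_, ?_⟩
  · rintro ⟨w₁, x₁, w₂, x₂, w₃, x₃, h₁, h₂, h₃, d₁₂, d₁₃, d₂₃⟩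
    have sub := altPathVerts_mono (by norm_num : 3 ≤ 4) w₃ x₃
    exact false_of_disjoint_altPaths hsplit hmax hfree hub hv hdeg h₁ h₂
      (h₃.mono (by norm_num) (by norm_num)) d₁₂ (d₁₃.mono_right sub) (d₂₃.mono_right sub)
  · rintro w₁ x₁ w₂ x₂ h₁ h₂ d₁₂ ⟨s, t, hq, d₁q, d₂q⟩
    exact false_of_disjoint_altPaths hsplit hmax hfree hub hv hdeg h₁ h₂ hq d₁₂ d₁q d₂q

/-- The collection of vertex-disjoint alternating paths contains at most two
paths on 7 vertices (`j = 4`), and if it contains two such paths then it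
contains no path on 5 vertices (`j = 3`). -/
theorem at_most_two_seven_vertex_paths [Fintype V] (G : SimpleGraph V)
    (K I : Set V) (hsplit : SplitPartition G K I) (hmax : MaxClique G K)
    (h2 : TwoConnected G) (hfree : StarFree G 4)
    (hI : 8 ≤ I.ncard) (hKI : I.ncard ≤ K.ncard)
    (hub : ∀ u ∈ K, (G.neighborSet u ∩ I).ncard ≤ 3)
    (v : V) (hv : v ∈ K) (hdeg : (G.neighborSet v ∩ I).ncard = 3)
    (hshort : ¬ HasShortCycle G K I) :
    (¬ ∃ (w₁ x₁ w₂ x₂ w₃ x₃ : ℕ → V),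
        IsAltPath G K I (G.neighborSet v ∩ I) 4 w₁ x₁ ∧
        IsAltPath G K I (G.neighborSet v ∩ I) 4 w₂ x₂ ∧
        IsAltPath G K I (G.neighborSet v ∩ I) 4 w₃ x₃ ∧
        Disjoint (altPathVerts 4 w₁ x₁) (altPathVerts 4 w₂ x₂) ∧
        Disjoint (altPathVerts 4 w₁ x₁) (altPathVerts 4 w₃ x₃) ∧
        Disjoint (altPathVerts 4 w₂ x₂) (altPathVerts 4 w₃ x₃)) ∧
    (∀ w₁ x₁ w₂ x₂ : ℕ → V,
        IsAltPath G K I (G.neighborSet v ∩ I) 4 w₁ x₁ →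
        IsAltPath G K I (G.neighborSet v ∩ I) 4 w₂ x₂ →
        Disjoint (altPathVerts 4 w₁ x₁) (altPathVerts 4 w₂ x₂) →
        ¬ ∃ (s t : ℕ → V), IsAltPath G K I (G.neighborSet v ∩ I) 3 s t ∧
            Disjoint (altPathVerts 4 w₁ x₁) (altPathVerts 3 s t) ∧
            Disjoint (altPathVerts 4 w₂ x₂) (altPathVerts 3 s t)) :=
  at_most_two_seven_vertex_paths_general G K I hsplit hmax hfree hub v hv hdeg
end
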